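/- Let C be a smooth projective curve, F a rank-2 vector bundle on C given as an extension 0 → B → F → B' → 0 of line bundles with B globally generated. Let W̄ := Im(H⁰(C,F) → H⁰(C,B')). If the multiplication map μ : H⁰(C,B) ⊗ W̄ → H⁰(C, det F) is injective, then the subspace H⁰(C,B) ⊆ H⁰(C,F) is strongly isotropic: the kernel K^⊥ of the determinant map d : ⋀²H⁰(C,F) → H⁰(C, det F) satisfies K^⊥ ∩ ⟨H⁰(C,B)⟩_E = ⋀²H⁰(C,B), where ⟨·⟩_E denotes the ideal generated in the exterior algebra ⋀H⁰(C,F). -/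

import Mathlib

/-! Split `r` by a linear section `s`, so that `V₀ = U ⊕ s(W')`. A projection of `V₀` with
kernel `U` induces an algebra endomorphism of `⋀ V₀` that kills `⟨U⟩_E` and moves a 2-vector
only by an element of `U ∧ V₀`; hence `⟨U⟩_E ∩ ⋀² V₀ ⊆ U ∧ V₀ = ⋀² U + U ∧ s(W')`. The second
summand is the image of `U ⊗ W'` under `u ⊗ w ↦ u ∧ s w`, along which `d` becomes `μ`, while
`d` vanishes on `⋀² U` because `r` does on `U`. So if `μ` is injective, an element of
`ker d ∩ ⟨U⟩_E ∩ ⋀² V₀` has no component in `U ∧ s(W')`. -/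

open scoped TensorProduct

noncomputable section

namespace StronglyIsotropic

variable (V₀ : Type) [AddCommGroup V₀] [Module ℂ V₀]

/-- The two-sided ideal `⟨U⟩_E` generated by a subspace `U ⊆ V₀` in the exterior algebra
`⋀ V₀`, as a submodule. -/
def idealSpan (U : Submodule ℂ V₀) : Submodule ℂ (ExteriorAlgebra ℂ V₀) :=
  Submodule.span ℂ {z | ∃ x y : ExteriorAlgebra ℂ V₀, ∃ u ∈ U,
    z = x * ExteriorAlgebra.ι ℂ u * y}

/-- The subspace `⋀² U ⊆ ⋀ V₀` spanned by wedges of two elements of `U`. -/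
def wedgeSquare (U : Submodule ℂ V₀) : Submodule ℂ (ExteriorAlgebra ℂ V₀) :=
  Submodule.span ℂ {z | ∃ u ∈ U, ∃ v ∈ U, z = ExteriorAlgebra.ι ℂ u * ExteriorAlgebra.ι ℂ v}

open ExteriorAlgebra LinearMap

section CommRing

variable {R M N : Type*} [CommRing R] [AddCommGroup M] [Module R M] [AddCommGroup N] [Module R N]

theorem ker_sup_range_eq_top_of_rightInverse {r : M →ₗ[R] N} {s : N →ₗ[R] M}
    (h : Function.RightInverse s r) :
    ker r ⊔ range s = ⊤ :=
  eq_top_iff.2 fun v _ => Submodule.mem_sup.2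
    ⟨v - s (r v), by simp [h (r v)], s (r v), mem_range_self s _, sub_add_cancel _ _⟩

theorem map_ι_mul_range_ι_eq_sup {U S : Submodule R M} (h : U ⊔ S = ⊤) :
    U.map (ι R) * range (ι R) = U.map (ι R) * U.map (ι R) ⊔ U.map (ι R) * S.map (ι R) := by
  rw [range_eq_map, ← h, Submodule.map_sup, Submodule.mul_sup]

theorem ι_mul_ι_mem_map_ι_mul_range_ι {U : Submodule R M} {u : M} (hu : u ∈ U) (v : M) :
    ι R v * ι R u ∈ U.map (ι R) * range (ι R) := by
  rw [eq_neg_of_add_eq_zero_left (ι_add_mul_swap v u)]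
  exact neg_mem (Submodule.mul_mem_mul (Submodule.mem_map_of_mem hu) (mem_range_self _ v))

theorem sub_map_mem_map_ι_mul_range_ι {U : Submodule R M} {f : M →ₗ[R] M}
    (hf : ∀ v, v - f v ∈ U) {z : ExteriorAlgebra R M} (hz : z ∈ ⋀[R]^2 M) :
    z - ExteriorAlgebra.map f z ∈ U.map (ι R) * range (ι R) := by
  rw [exteriorPower, pow_two] at hz
  refine Submodule.mul_induction_on hz (fun a ha b hb => ?_) fun x y hx hy => ?_
  · obtain ⟨a, rfl⟩ := ha
    obtain ⟨b, rfl⟩ := hb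
    have hsplit : ι R a * ι R b - ExteriorAlgebra.map f (ι R a * ι R b)
        = ι R (a - f a) * ι R b + ι R (f a) * ι R (b - f b) := by
      simp only [map_mul, map_apply_ι, map_sub, sub_mul, mul_sub]
      abel
    rw [hsplit]
    exact add_mem (Submodule.mul_mem_mul (Submodule.mem_map_of_mem (hf a)) (mem_range_self _ b))
      (ι_mul_ι_mem_map_ι_mul_range_ι (hf b) _)
  · rw [map_add, add_sub_add_comm]
    exact add_mem hx hy

def wedgeMap (U : Submodule R M) (s : N →ₗ[R] M) : U ⊗[R] N →ₗ[R] ExteriorAlgebra R M :=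
  TensorProduct.lift ((mul R _).compl₁₂ (ι R ∘ₗ U.subtype) (ι R ∘ₗ s))

@[simp]
theorem wedgeMap_tmul (U : Submodule R M) (s : N →ₗ[R] M) (u : U) (w : N) :
    wedgeMap U s (u ⊗ₜ w) = ι R (u : M) * ι R (s w) :=
  rfl

theorem map_ι_mul_map_ι_range_le_range_wedgeMap (U : Submodule R M) (s : N →ₗ[R] M) :
    U.map (ι R) * (range s).map (ι R) ≤ range (wedgeMap U s) := by
  rw [Submodule.mul_le]
  rintro _ ⟨u, hu, rfl⟩ _ ⟨_, ⟨w, rfl⟩, rfl⟩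
  exact ⟨⟨u, hu⟩ ⊗ₜ w, rfl⟩

end CommRing

theorem idealSpan_le_ker_map {N : Type*} [AddCommGroup N] [Module ℂ N] {U : Submodule ℂ V₀}
    {f : V₀ →ₗ[ℂ] N} (hf : U ≤ ker f) :
    idealSpan V₀ U ≤ ker (ExteriorAlgebra.map f).toLinearMap := by
  rw [idealSpan, Submodule.span_le]
  rintro _ ⟨x, y, u, hu, rfl⟩
  simp [LinearMap.mem_ker.1 (hf hu)]

theorem idealSpan_inf_exteriorPower_two_le (U : Submodule ℂ V₀) :
    idealSpan V₀ U ⊓ ⋀[ℂ]^2 V₀ ≤ U.map (ι ℂ) * range (ι ℂ) := by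
  rintro z ⟨hzI, hz2⟩
  obtain ⟨q, hq⟩ := U.exists_isCompl
  have hF : ExteriorAlgebra.map (q.projection U hq.symm) z = 0 :=
    idealSpan_le_ker_map V₀ (fun _ hu => (q.projection_apply_eq_zero_iff hq.symm).2 hu) hzI
  simpa [hF] using sub_map_mem_map_ι_mul_range_ι (q.sub_projection_mem hq.symm) hz2

theorem wedgeSquare_eq_mul (U : Submodule ℂ V₀) :
    wedgeSquare V₀ U = U.map (ι ℂ) * U.map (ι ℂ) := by
  rw [Submodule.mul_eq_map₂, Submodule.map₂_eq_span_image2, wedgeSquare]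
  congr 1
  ext z
  simp [Set.mem_mul, eq_comm]

theorem wedgeSquare_le_ker_inf_idealSpan_inf {T : Type*} [AddCommGroup T] [Module ℂ T]
    (U : Submodule ℂ V₀) (d : ExteriorAlgebra ℂ V₀ →ₗ[ℂ] T)
    (hd : ∀ u ∈ U, ∀ v ∈ U, d (ι ℂ u * ι ℂ v) = 0) :
    wedgeSquare V₀ U ≤ ker d ⊓ idealSpan V₀ U ⊓ ⋀[ℂ]^2 V₀ := by
  rw [wedgeSquare, Submodule.span_le]
  rintro _ ⟨u, hu, v, hv, rfl⟩
  refine ⟨⟨hd u hu v hv, Submodule.subset_span ⟨1, ι ℂ v, u, hu, by rw [one_mul]⟩⟩, ?_⟩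
  rw [exteriorPower, pow_two]
  exact Submodule.mul_mem_mul (mem_range_self _ u) (mem_range_self _ v)

/-- Here `V₀ = H⁰(C,F)`, `U = H⁰(C,B)` is the kernel of `r : H⁰(C,F) → W̄`, `d` is the
determinant map, `μ` the multiplication map, and `K^⊥ = ker d ∩ ⋀² V₀`. -/
theorem stronglyIsotropic_of_injective_mul
    (T W' : Type) [AddCommGroup T] [Module ℂ T] [AddCommGroup W'] [Module ℂ W']
    (U : Submodule ℂ V₀)
    (r : V₀ →ₗ[ℂ] W') (hr : Function.Surjective r) (hker : LinearMap.ker r = U)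
    (d : ExteriorAlgebra ℂ V₀ →ₗ[ℂ] T)
    (μ : (↥U ⊗[ℂ] W') →ₗ[ℂ] T)
    (hcompat : ∀ (u : ↥U) (v : V₀),
      μ (u ⊗ₜ[ℂ] r v) = d (ExteriorAlgebra.ι ℂ (u : V₀) * ExteriorAlgebra.ι ℂ v))
    (hμ : Function.Injective μ) :
    LinearMap.ker d ⊓ idealSpan V₀ U ⊓ ⋀[ℂ]^2 V₀ = wedgeSquare V₀ U := by
  have hiso : ∀ u ∈ U, ∀ v ∈ U, d (ι ℂ u * ι ℂ v) = 0 := fun u hu v hv => by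
    rw [← hcompat ⟨u, hu⟩ v, mem_ker.1 (hker.symm ▸ hv : v ∈ ker r), TensorProduct.tmul_zero,
      map_zero]
  have hle := wedgeSquare_le_ker_inf_idealSpan_inf V₀ U d hiso
  refine le_antisymm (fun z ⟨⟨hzd, hzI⟩, hz2⟩ => ?_) hle
  obtain ⟨s, hs⟩ := r.exists_rightInverse_of_surjective (range_eq_top.2 hr)
  have hrs : Function.RightInverse s r := LinearMap.congr_fun hs
  have hdμ : d ∘ₗ wedgeMap U s = μ := TensorProduct.ext' fun u w => by simp [← hcompat, hrs w]
  have hz : z ∈ wedgeSquare V₀ U ⊔ U.map (ι ℂ) * (range s).map (ι ℂ) := by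
    rw [wedgeSquare_eq_mul,
      ← map_ι_mul_range_ι_eq_sup (hker ▸ ker_sup_range_eq_top_of_rightInverse hrs)]
    exact idealSpan_inf_exteriorPower_two_le V₀ U ⟨hzI, hz2⟩
  obtain ⟨a, ha, _, hb, rfl⟩ := Submodule.mem_sup.1 hz
  obtain ⟨t, rfl⟩ := map_ι_mul_map_ι_range_le_range_wedgeMap U s hb
  have ht : t = 0 := hμ <| by
    have hda : d a = 0 := (hle ha).1.1
    have hdz : d (a + wedgeMap U s t) = 0 := hzd
    rwa [map_add, hda, zero_add, ← comp_apply, hdμ, ← map_zero μ] at hdz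
  simpa [ht] using ha

end StronglyIsotropic
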